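/- Limit of the symmetrized Rényi index (Jeffrey's divergence form): the limit as α tends to 1 (with α ≠ 0, 1) of SR_α(p, q) equals (1/2) · Σ_j p̄_j (r̄_j − 1) ln r̄_j, and the limit as α tends to 0 equals the same quantity, where p̄_j = p_j/Σ_k p_k, q̄_j = q_j/Σ_k q_k, and r̄_j = q̄_j/p̄_j. -/

import Mathlib

/-- Generalized Rényi (alpha-gamma) divergence of order `α` between two
positive mass functions `p q : Fin m → ℝ`, with `r j = q j / p j`. -/
noncomputable def renyiDiv (m : ℕ) (α : ℝ) (p q : Fin m → ℝ) : ℝ :=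
  (1 / (α * (1 - α))) *
    Real.log (((∑ j, p j) ^ α * (∑ j, p j * (q j / p j)) ^ (1 - α)) /
      ∑ j, p j * (q j / p j) ^ (1 - α))
/-- Symmetrized Rényi index `SR_α(p,q) = (R_α(p‖q) + R_{1−α}(p‖q))/2`. -/
noncomputable def symRenyi (m : ℕ) (α : ℝ) (p q : Fin m → ℝ) : ℝ :=
  (renyiDiv m α p q + renyiDiv m (1 - α) p q) / 2

/-! With `P = ∑ p`, `Q = ∑ q` and `S(α) = ∑ p_j r_j^(1-α)`, the logarithm in `R_α` is
`N(α) = α log P + (1-α) log Q - log S(α)`, which vanishes at `α = 0` and at `α = 1`. Hence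
`SR_α = (N(α) + N(1-α)) / (2α(1-α))` is a difference quotient at `α = 1`, with limit
`(N'(0) - N'(1)) / 2 = (KL(q̄‖p̄) + KL(p̄‖q̄)) / 2`, Jeffreys' divergence. As `SR_α` is invariant
under `α ↦ 1 - α`, the limit at `0` is the same. -/

open Filter Topology Real Finset

section
variable {ι : Type*} [Fintype ι]

theorem hasDerivAt_sum_mul_rpow_one_sub (p r : ι → ℝ) (hr : ∀ j, 0 < r j) (a : ℝ) :
    HasDerivAt (fun α => ∑ j, p j * r j ^ (1 - α))
      (-∑ j, p j * (r j ^ (1 - a) * log (r j))) a := by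
  rw [← sum_neg_distrib]
  refine HasDerivAt.fun_sum fun j _ => ?_
  have hexp := (hasStrictDerivAt_const_rpow (hr j) (1 - a)).hasDerivAt.comp a
    ((hasDerivAt_id a).const_sub 1)
  refine (hexp.const_mul (p j)).congr_deriv ?_
  ring

theorem sum_mul_div_cancel {p q : ι → ℝ} (hp : ∀ j, p j ≠ 0) :
    ∑ j, p j * (q j / p j) = ∑ j, q j :=
  sum_congr rfl fun j _ => mul_div_cancel₀ _ (hp j)

/-- The logarithm in `renyiDiv`, expanded as it is for positive masses. -/
noncomputable def renyiNumerator (p q : ι → ℝ) (α : ℝ) : ℝ :=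
  α * log (∑ j, p j) + (1 - α) * log (∑ j, q j) - log (∑ j, p j * (q j / p j) ^ (1 - α))

theorem renyiNumerator_one (p q : ι → ℝ) : renyiNumerator p q 1 = 0 := by
  simp [renyiNumerator]

theorem renyiNumerator_zero {p q : ι → ℝ} (hp : ∀ j, p j ≠ 0) : renyiNumerator p q 0 = 0 := by
  simp [renyiNumerator, sum_mul_div_cancel hp]

variable [Nonempty ι] {p q : ι → ℝ}

theorem hasDerivAt_renyiNumerator (hp : ∀ j, 0 < p j) (hq : ∀ j, 0 < q j) (a : ℝ) :
    HasDerivAt (renyiNumerator p q)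
      (log (∑ j, p j) - log (∑ j, q j) +
        (∑ j, p j * ((q j / p j) ^ (1 - a) * log (q j / p j))) /
          ∑ j, p j * (q j / p j) ^ (1 - a)) a := by
  have hr j : 0 < q j / p j := div_pos (hq j) (hp j)
  have hS : 0 < ∑ j, p j * (q j / p j) ^ (1 - a) :=
    sum_pos (fun j _ => mul_pos (hp j) (rpow_pos_of_pos (hr j) _)) univ_nonempty
  have hlin : HasDerivAt (fun α => α * log (∑ j, p j) + (1 - α) * log (∑ j, q j))
      (log (∑ j, p j) - log (∑ j, q j)) a := by
    refine (((hasDerivAt_id a).mul_const _).add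
      (((hasDerivAt_id a).const_sub 1).mul_const (log (∑ j, q j)))).congr_deriv ?_
    ring
  refine (hlin.sub ((hasDerivAt_sum_mul_rpow_one_sub p _ hr a).log hS.ne')).congr_deriv ?_
  ring

theorem hasDerivAt_renyiNumerator_one (hp : ∀ j, 0 < p j) (hq : ∀ j, 0 < q j) :
    HasDerivAt (renyiNumerator p q)
      (log (∑ j, p j) - log (∑ j, q j) + (∑ j, p j * log (q j / p j)) / ∑ j, p j) 1 := by
  simpa using hasDerivAt_renyiNumerator hp hq 1

theorem hasDerivAt_renyiNumerator_zero (hp : ∀ j, 0 < p j) (hq : ∀ j, 0 < q j) :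
    HasDerivAt (renyiNumerator p q)
      (log (∑ j, p j) - log (∑ j, q j) + (∑ j, q j * log (q j / p j)) / ∑ j, q j) 0 := by
  have hpq j : p j * (q j / p j) = q j := mul_div_cancel₀ _ (hp j).ne'
  simpa [← mul_assoc, hpq] using hasDerivAt_renyiNumerator hp hq 0

end

theorem sum_jeffreys_eq {ι : Type*} [Fintype ι] [Nonempty ι] {p q : ι → ℝ}
    (hp : ∀ j, 0 < p j) (hq : ∀ j, 0 < q j) :
    ∑ j, (p j / ∑ k, p k) * (((q j / ∑ k, q k) / (p j / ∑ k, p k)) - 1) *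
        log ((q j / ∑ k, q k) / (p j / ∑ k, p k)) =
      (∑ j, q j * log (q j / p j)) / ∑ j, q j - (∑ j, p j * log (q j / p j)) / ∑ j, p j := by
  set P := ∑ k, p k
  set Q := ∑ k, q k
  have hP : 0 < P := sum_pos (fun j _ => hp j) univ_nonempty
  have hQ : 0 < Q := sum_pos (fun j _ => hq j) univ_nonempty
  -- `log r̄ = log r + log (P / Q)`, and the shift is killed by `∑ (q̄ - p̄) = 0`
  have hterm j : (p j / P) * (((q j / Q) / (p j / P)) - 1) * log ((q j / Q) / (p j / P)) =
      q j * log (q j / p j) / Q - p j * log (q j / p j) / P +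
        (log P - log Q) * (q j / Q - p j / P) := by
    have hpj := (hp j).ne'
    rw [show (q j / Q) / (p j / P) = (q j / p j) * (P / Q) by field_simp,
      log_mul (div_pos (hq j) (hp j)).ne' (div_pos hP hQ).ne', log_div hP.ne' hQ.ne']
    field_simp
  have hnorm {f : ι → ℝ} {F : ℝ} (hF : F = ∑ j, f j) (hF0 : 0 < F) : ∑ j, f j / F = 1 := by
    rw [← sum_div, ← hF, div_self hF0.ne']
  rw [sum_congr rfl fun j _ => hterm j, sum_add_distrib, sum_sub_distrib, ← mul_sum,
    sum_sub_distrib, hnorm rfl hQ, hnorm rfl hP, sum_div, sum_div]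
  ring

theorem tendsto_div_mul_one_sub_nhdsNE_one {g : ℝ → ℝ} {g' : ℝ} (hg : HasDerivAt g g' 1)
    (hg1 : g 1 = 0) : Tendsto (fun α => g α / (α * (1 - α))) (𝓝[≠] 1) (𝓝 (-g')) := by
  have hinv : Tendsto (fun α : ℝ => -α⁻¹) (𝓝[≠] 1) (𝓝 (-1)) := by
    have h := ((tendsto_inv₀ (one_ne_zero (α := ℝ))).neg).mono_left
      (nhdsWithin_le_nhds (s := {1}ᶜ))
    rwa [inv_one] at h
  have hprod := (hasDerivAt_iff_tendsto_slope.mp hg).mul hinv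
  rw [mul_neg_one] at hprod
  refine hprod.congr fun α => ?_
  rw [slope_def_field, hg1, sub_zero, ← neg_sub 1 α, div_neg, div_eq_mul_inv, div_eq_mul_inv,
    mul_inv]
  ring

section
variable {m : ℕ} [Nonempty (Fin m)] {p q : Fin m → ℝ}

theorem renyiDiv_eq_renyiNumerator_div (hp : ∀ j, 0 < p j) (hq : ∀ j, 0 < q j) (α : ℝ) :
    renyiDiv m α p q = renyiNumerator p q α / (α * (1 - α)) := by
  have hP : 0 < ∑ j, p j := sum_pos (fun j _ => hp j) univ_nonempty
  have hQ : 0 < ∑ j, q j := sum_pos (fun j _ => hq j) univ_nonempty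
  have hS : 0 < ∑ j, p j * (q j / p j) ^ (1 - α) :=
    sum_pos (fun j _ => mul_pos (hp j) (rpow_pos_of_pos (div_pos (hq j) (hp j)) _)) univ_nonempty
  rw [renyiDiv, sum_mul_div_cancel fun j => (hp j).ne', log_div (by positivity) hS.ne',
    log_mul (by positivity) (by positivity), log_rpow hP, log_rpow hQ, one_div_mul_eq_div,
    renyiNumerator]

theorem symRenyi_eq (hp : ∀ j, 0 < p j) (hq : ∀ j, 0 < q j) (α : ℝ) :
    symRenyi m α p q =
      (renyiNumerator p q α + renyiNumerator p q (1 - α)) / 2 / (α * (1 - α)) := by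
  rw [symRenyi, renyiDiv_eq_renyiNumerator_div hp hq, renyiDiv_eq_renyiNumerator_div hp hq,
    sub_sub_cancel, mul_comm (1 - α)]
  ring

theorem tendsto_symRenyi_nhdsNE_one (hp : ∀ j, 0 < p j) (hq : ∀ j, 0 < q j) :
    Tendsto (fun α => symRenyi m α p q) (𝓝[≠] 1)
      (𝓝 ((1 / 2) * ∑ j, (p j / ∑ k, p k) *
          (((q j / ∑ k, q k) / (p j / ∑ k, p k)) - 1) *
          log ((q j / ∑ k, q k) / (p j / ∑ k, p k)))) := by
  have hderiv : HasDerivAt (fun α => (renyiNumerator p q α + renyiNumerator p q (1 - α)) / 2)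
      _ 1 := ((hasDerivAt_renyiNumerator_one hp hq).add
    ((hasDerivAt_renyiNumerator_zero hp hq).comp_of_eq 1 ((hasDerivAt_id (1 : ℝ)).const_sub 1)
      (sub_self (1 : ℝ)).symm)).div_const 2
  have hlim := tendsto_div_mul_one_sub_nhdsNE_one hderiv
    (by simp [renyiNumerator_one, renyiNumerator_zero fun j => (hp j).ne'])
  simp only [symRenyi_eq hp hq]
  convert hlim using 2
  rw [sum_jeffreys_eq hp hq]
  ring

end

theorem symRenyi_one_sub (m : ℕ) (α : ℝ) (p q : Fin m → ℝ) :
    symRenyi m (1 - α) p q = symRenyi m α p q := by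
  rw [symRenyi, symRenyi, sub_sub_cancel, add_comm]

/-- Limit of the symmetrized Rényi index (Jeffrey's divergence form): as `α`
tends to `1` (resp. `0`) with `α ≠ 0, 1`, `SR_α(p,q)` tends to
`(1/2)·Σ_j p̄_j (r̄_j − 1) ln r̄_j`. -/
theorem symRenyi_tendsto (m : ℕ) (hm : 1 ≤ m) (p q : Fin m → ℝ)
    (hp : ∀ j, 0 < p j) (hq : ∀ j, 0 < q j) :
    Filter.Tendsto (fun α : ℝ => symRenyi m α p q)
        (nhdsWithin 1 {α : ℝ | α ≠ 0 ∧ α ≠ 1})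
        (nhds ((1 / 2) * ∑ j, (p j / ∑ k, p k) *
          (((q j / ∑ k, q k) / (p j / ∑ k, p k)) - 1) *
          Real.log ((q j / ∑ k, q k) / (p j / ∑ k, p k)))) ∧
      Filter.Tendsto (fun α : ℝ => symRenyi m α p q)
        (nhdsWithin 0 {α : ℝ | α ≠ 0 ∧ α ≠ 1})
        (nhds ((1 / 2) * ∑ j, (p j / ∑ k, p k) *
          (((q j / ∑ k, q k) / (p j / ∑ k, p k)) - 1) *
          Real.log ((q j / ∑ k, q k) / (p j / ∑ k, p k)))) := by
  have : Nonempty (Fin m) := ⟨⟨0, hm⟩⟩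
  have hlim1 := (tendsto_symRenyi_nhdsNE_one hp hq).mono_left
    (nhdsWithin_mono 1 fun α (hα : α ≠ 0 ∧ α ≠ 1) => hα.2)
  refine ⟨hlim1, ?_⟩
  have hflip : Tendsto (fun α : ℝ => 1 - α) (𝓝[{α | α ≠ 0 ∧ α ≠ 1}] 0)
      (𝓝[{α | α ≠ 0 ∧ α ≠ 1}] 1) :=
    tendsto_nhdsWithin_iff.mpr ⟨((continuous_sub_left 1).tendsto' 0 1 (sub_zero 1)).mono_left
      nhdsWithin_le_nhds, eventually_nhdsWithin_of_forall fun α ⟨h0, h1⟩ =>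
        ⟨sub_ne_zero.mpr (Ne.symm h1), by simpa using h0⟩⟩
  exact (hlim1.comp hflip).congr fun α => symRenyi_one_sub m α p q
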